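/- arXiv:2203.09612 — 4 statements merged into one kernel-verified Lean document; each statement's English description precedes it below -/
import Mathlib

section
/- Suppose σ satisfies conditions (a) σ(μ*δ_c) = σ(μ)+c, (b) first-order stochastic dominance monotonicity, and (c) the mixture-convexity condition along couplings. Then ρ(X) := σ(law of X) for X ∈ L^∞(Ω,H,P) is a law-invariant convex risk measure; moreover if σ(δ_0) = 0 then ρ(0) = 0. -/
/-!
Every property of `ρ(X) = σ(law of X)` is the corresponding property of `σ` applied to laws
of bounded random variables, which have bounded support. Translation invariance is (a) for the
law of `X`; an a.s. inequality `X ≤ X'` makes the law of `X'` dominate that of `X` in first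
order, so (b) applies; and for convexity the joint law of `(X', X)` is a coupling of the two
marginals whose `θ`-mixture is the law of `θ X + (1 - θ) X'`, so (c) applies.
-/

open MeasureTheory Set

namespace MeasureTheory.Measure

variable {α β : Type*} [MeasurableSpace α] [MeasurableSpace β]

lemma map_compl_eq_zero_of_forall_mem (μ : Measure α) {f : α → β} (hf : Measurable f)
    {s : Set β} (hs : MeasurableSet s) (h : ∀ a, f a ∈ s) : μ.map f sᶜ = 0 := by
  have hpre : f ⁻¹' s = univ := eq_univ_of_forall h
  rw [map_apply hf hs.compl, preimage_compl, hpre, compl_univ, measure_empty]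

lemma map_Icc_compl_eq_zero_of_abs_le (μ : Measure α) {X : α → ℝ} (hX : Measurable X) {M : ℝ}
    (hM : ∀ a, |X a| ≤ M) : μ.map X (Icc (-M) M)ᶜ = 0 :=
  map_compl_eq_zero_of_forall_mem μ hX measurableSet_Icc fun a ↦ abs_le.mp (hM a)

lemma map_prodMk_Icc_prod_Icc_compl_eq_zero_of_abs_le (μ : Measure α) {X Y : α → ℝ}
    (hX : Measurable X) (hY : Measurable Y) {M N : ℝ} (hM : ∀ a, |X a| ≤ M)
    (hN : ∀ a, |Y a| ≤ N) :
    μ.map (fun a ↦ (X a, Y a)) (Icc (-max M N) (max M N) ×ˢ Icc (-max M N) (max M N))ᶜ = 0 :=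
  map_compl_eq_zero_of_forall_mem μ (hX.prodMk hY) (measurableSet_Icc.prod measurableSet_Icc)
    fun a ↦ ⟨abs_le.mp ((hM a).trans (le_max_left M N)),
      abs_le.mp ((hN a).trans (le_max_right M N))⟩

lemma map_Iic_le_of_ae_le (μ : Measure α) {X Y : α → ℝ} (hX : Measurable X) (hY : Measurable Y)
    (hXY : X ≤ᵐ[μ] Y) (r : ℝ) : μ.map Y (Iic r) ≤ μ.map X (Iic r) := by
  rw [map_apply hY measurableSet_Iic, map_apply hX measurableSet_Iic]
  exact measure_mono_ae <| hXY.mono fun a hXYa hYa ↦ hXYa.trans hYa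

end MeasureTheory.Measure

def CouplingConvex (σ : Measure ℝ → EReal) : Prop :=
  ∀ ζ : Measure (ℝ × ℝ), IsProbabilityMeasure ζ →
    (∃ M : ℝ, ζ (Icc (-M) M ×ˢ Icc (-M) M)ᶜ = 0) →
    ∀ θ : ℝ, 0 < θ → θ < 1 →
      σ (Measure.map (fun p : ℝ × ℝ => (1 - θ) * p.1 + θ * p.2) ζ) ≤
        ((1 - θ : ℝ) : EReal) * σ (Measure.map Prod.fst ζ) +
          ((θ : ℝ) : EReal) * σ (Measure.map Prod.snd ζ)

lemma CouplingConvex.map_convexComb_le {Ω : Type*} [MeasurableSpace Ω] {P : Measure Ω}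
    [IsProbabilityMeasure P] {σ : Measure ℝ → EReal} (hσ : CouplingConvex σ) {X Y : Ω → ℝ}
    (hX : Measurable X) (hY : Measurable Y) (hXb : ∃ M : ℝ, ∀ ω, |X ω| ≤ M)
    (hYb : ∃ M : ℝ, ∀ ω, |Y ω| ≤ M) {θ : ℝ} (hθ₀ : 0 ≤ θ) (hθ₁ : θ ≤ 1) :
    σ (P.map fun ω ↦ θ * X ω + (1 - θ) * Y ω) ≤
      ((θ : ℝ) : EReal) * σ (P.map X) + ((1 - θ : ℝ) : EReal) * σ (P.map Y) := by
  rcases hθ₀.eq_or_lt with rfl | hθ₀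
  · simp
  rcases hθ₁.eq_or_lt with rfl | hθ₁
  · simp
  obtain ⟨M, hM⟩ := hXb
  obtain ⟨N, hN⟩ := hYb
  have hYX : Measurable fun ω ↦ (Y ω, X ω) := hY.prodMk hX
  have hmix : (P.map fun ω ↦ (Y ω, X ω)).map (fun p ↦ (1 - θ) * p.1 + θ * p.2) =
      P.map fun ω ↦ θ * X ω + (1 - θ) * Y ω := by
    rw [Measure.map_map (by fun_prop) hYX]
    congr 1
    funext ω
    simp only [Function.comp_apply]
    ring
  have h := hσ _ (Measure.isProbabilityMeasure_map hYX.aemeasurable)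
    ⟨_, Measure.map_prodMk_Icc_prod_Icc_compl_eq_zero_of_abs_le P hY hX hN hM⟩ θ hθ₀ hθ₁
  rwa [hmix, show Measure.map Prod.fst _ = _ from Measure.fst_map_prodMk hX,
    show Measure.map Prod.snd _ = _ from Measure.snd_map_prodMk hY, add_comm] at h

theorem stmt3
    {Ω : Type*} [MeasurableSpace Ω] (P : Measure Ω) [IsProbabilityMeasure P]
    (σ : Measure ℝ → EReal)
    -- (a) translation
    (ha : ∀ μ : Measure ℝ, IsProbabilityMeasure μ → (∃ M : ℝ, μ (Set.Icc (-M) M)ᶜ = 0) →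
      ∀ c : ℝ, σ (Measure.map (fun x => x + c) μ) = σ μ + (c : EReal))
    -- (b) monotonicity with respect to first-order stochastic dominance
    (hb : ∀ μ μ' : Measure ℝ, IsProbabilityMeasure μ → IsProbabilityMeasure μ' →
      (∃ M : ℝ, μ (Set.Icc (-M) M)ᶜ = 0) → (∃ M : ℝ, μ' (Set.Icc (-M) M)ᶜ = 0) →
      (∀ r : ℝ, μ' (Set.Iic r) ≤ μ (Set.Iic r)) → σ μ ≤ σ μ')
    -- (c) mixture-convexity along couplings
    (hc : ∀ ζ : Measure (ℝ × ℝ), IsProbabilityMeasure ζ →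
      (∃ M : ℝ, ζ (Set.Icc (-M) M ×ˢ Set.Icc (-M) M)ᶜ = 0) →
      ∀ θ : ℝ, 0 < θ → θ < 1 →
        σ (Measure.map (fun p : ℝ × ℝ => (1 - θ) * p.1 + θ * p.2) ζ) ≤
          ((1 - θ : ℝ) : EReal) * σ (Measure.map Prod.fst ζ) +
            ((θ : ℝ) : EReal) * σ (Measure.map Prod.snd ζ)) :
    -- ρ(X) := σ(law of X) is a law-invariant convex risk measure on bounded r.v.'s
    (∀ (Z : Ω → ℝ) (c : ℝ), Measurable Z → (∃ M : ℝ, ∀ ω, |Z ω| ≤ M) →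
        σ (Measure.map (fun ω => Z ω + c) P) = σ (Measure.map Z P) + (c : EReal)) ∧
    (∀ Z Z' : Ω → ℝ, Measurable Z → Measurable Z' →
        (∃ M : ℝ, ∀ ω, |Z ω| ≤ M) → (∃ M : ℝ, ∀ ω, |Z' ω| ≤ M) →
        (∀ᵐ ω ∂P, Z ω ≤ Z' ω) → σ (Measure.map Z P) ≤ σ (Measure.map Z' P)) ∧
    (∀ (Z Z' : Ω → ℝ) (θ : ℝ), Measurable Z → Measurable Z' →
        (∃ M : ℝ, ∀ ω, |Z ω| ≤ M) → (∃ M : ℝ, ∀ ω, |Z' ω| ≤ M) → 0 ≤ θ → θ ≤ 1 →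
        σ (Measure.map (fun ω => θ * Z ω + (1 - θ) * Z' ω) P) ≤
          ((θ : ℝ) : EReal) * σ (Measure.map Z P) +
            ((1 - θ : ℝ) : EReal) * σ (Measure.map Z' P)) ∧
    (∀ Z Z' : Ω → ℝ, Measurable Z → Measurable Z' →
        Measure.map Z P = Measure.map Z' P →
        σ (Measure.map Z P) = σ (Measure.map Z' P)) ∧
    (σ (Measure.dirac (0 : ℝ)) = 0 → σ (Measure.map (fun _ : Ω => (0 : ℝ)) P) = 0) := by
  have hlaw {Z : Ω → ℝ} (hZ : Measurable Z) : IsProbabilityMeasure (P.map Z) :=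
    Measure.isProbabilityMeasure_map hZ.aemeasurable
  refine ⟨?translation, ?monotone, ?convex, ?lawInvariant, ?normalized⟩
  case translation =>
    rintro Z c hZ ⟨M, hM⟩
    rw [show (fun ω ↦ Z ω + c) = (· + c) ∘ Z from rfl,
      ← Measure.map_map (measurable_add_const c) hZ]
    exact ha _ (hlaw hZ) ⟨M, Measure.map_Icc_compl_eq_zero_of_abs_le P hZ hM⟩ c
  case monotone =>
    rintro Z Z' hZ hZ' ⟨M, hM⟩ ⟨M', hM'⟩ hZZ'
    exact hb _ _ (hlaw hZ) (hlaw hZ') ⟨M, Measure.map_Icc_compl_eq_zero_of_abs_le P hZ hM⟩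
      ⟨M', Measure.map_Icc_compl_eq_zero_of_abs_le P hZ' hM'⟩
      (Measure.map_Iic_le_of_ae_le P hZ hZ' hZZ')
  case convex =>
    intro Z Z' θ hZ hZ' hZb hZ'b hθ₀ hθ₁
    exact CouplingConvex.map_convexComb_le hc hZ hZ' hZb hZ'b hθ₀ hθ₁
  case lawInvariant =>
    intro Z Z' _ _ h
    rw [h]
  case normalized =>
    intro h₀
    simpa [Measure.map_const] using h₀
end

section
/- Let Y, Z be topological spaces, f : Y × Z → ℝ lower semicontinuous, and φ : Y → 2^Z nonempty compact-valued and upper hemicontinuous. Then for each y ∈ Y the infimum inf_{z ∈ φ(y)} f(y,z) is attained, and the value function y ↦ inf_{z ∈ φ(y)} f(y,z) is lower semicontinuous on Y. -/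
/-! The minimum over the compact fibre `φ y` is attained by lower semicontinuity of `f (y, ·)`.
If `c` lies below the minimum at `y`, the tube lemma applied to the open set `{f > c}` around
`{y} × φ y` yields a neighbourhood `V` of `y` and an open `U ⊇ φ y` with `f > c` on `V × U`;
upper hemicontinuity puts `φ y'` inside `U` for `y'` near `y`, so the minimum at such `y'` is
again above `c`. -/

open Set Filter Topology

theorem IsMinOn.csInf_image_eq {α β : Type*} [ConditionallyCompleteLattice β] {f : α → β}
    {s : Set α} {a : α} (ha : a ∈ s) (h : IsMinOn f s a) : sInf (f '' s) = f a :=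
  IsLeast.csInf_eq ⟨mem_image_of_mem f ha, forall_mem_image.2 fun _ hx => isMinOn_iff.1 h _ hx⟩

section

variable {Y Z β : Type*} [TopologicalSpace Y] [TopologicalSpace Z]

theorem LowerSemicontinuous.exists_isMinOn_section [LinearOrder β] {f : Y × Z → β}
    (hf : LowerSemicontinuous f) (y : Y) {K : Set Z} (hK : IsCompact K) (hne : K.Nonempty) :
    ∃ z ∈ K, IsMinOn (fun z => f (y, z)) K z :=
  ((hf.comp (.prodMk_right y)).lowerSemicontinuousOn K).exists_isMinOn hne hK

theorem LowerSemicontinuous.exists_isOpen_superset_eventually_lt [Preorder β] {f : Y × Z → β}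
    (hf : LowerSemicontinuous f) {y : Y} {K : Set Z} (hK : IsCompact K) {c : β}
    (hc : ∀ z ∈ K, c < f (y, z)) :
    ∃ U, IsOpen U ∧ K ⊆ U ∧ ∀ᶠ y' in 𝓝 y, ∀ z ∈ U, c < f (y', z) := by
  have hfibre : ({y} : Set Y) ×ˢ K ⊆ {p | c < f p} := by
    rintro ⟨y', z⟩ ⟨rfl, hz⟩
    exact hc z hz
  obtain ⟨V, U, hV, hU, hyV, hKU, hVU⟩ :=
    generalized_tube_lemma isCompact_singleton hK (hf.isOpen_preimage c) hfibre
  exact ⟨U, hU, hKU, eventually_of_mem (hV.mem_nhds (singleton_subset_iff.1 hyV))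
    fun y' hy' z hz => hVU (mk_mem_prod hy' hz)⟩

theorem LowerSemicontinuous.sInf_image_of_upperHemicontinuous
    [ConditionallyCompleteLinearOrder β] {f : Y × Z → β} (hf : LowerSemicontinuous f)
    {φ : Y → Set Z} (hne : ∀ y, (φ y).Nonempty) (hcomp : ∀ y, IsCompact (φ y))
    (hφ : UpperHemicontinuous φ) :
    LowerSemicontinuous fun y => sInf ((fun z => f (y, z)) '' φ y) := by
  intro y c (hc : c < sInf ((fun z => f (y, z)) '' φ y))
  obtain ⟨z, hz, hmin⟩ := hf.exists_isMinOn_section y (hcomp y) (hne y)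
  rw [hmin.csInf_image_eq hz] at hc
  obtain ⟨U, hU, hφU, hlt⟩ :=
    hf.exists_isOpen_superset_eventually_lt (hcomp y) fun z' hz' => hc.trans_le (hmin hz')
  filter_upwards [hlt, hφ.forall_isOpen y U hU hφU] with y' hltU hφ'U
  obtain ⟨z', hz', hmin'⟩ := hf.exists_isMinOn_section y' (hcomp y') (hne y')
  show c < sInf _
  rw [hmin'.csInf_image_eq hz']
  exact hltU z' (hφ'U hz')

end

theorem stmt13
    {Y Z : Type*} [TopologicalSpace Y] [TopologicalSpace Z]
    (f : Y × Z → ℝ) (hflsc : LowerSemicontinuous f)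
    (φ : Y → Set Z)
    (hne : ∀ y, (φ y).Nonempty)
    (hcomp : ∀ y, IsCompact (φ y))
    (huhc : ∀ y, ∀ U : Set Z, IsOpen U → φ y ⊆ U →
      ∃ V : Set Y, IsOpen V ∧ y ∈ V ∧ ∀ y' ∈ V, φ y' ⊆ U) :
    (∀ y, ∃ z ∈ φ y, ∀ z' ∈ φ y, f (y, z) ≤ f (y, z')) ∧
    LowerSemicontinuous (fun y => sInf ((fun z => f (y, z)) '' φ y)) := by
  have hφ : UpperHemicontinuous φ := .of_forall_isOpen fun y U hU hφU =>
    let ⟨V, hV, hyV, hVU⟩ := huhc y U hU hφU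
    eventually_nhds_iff.2 ⟨V, hVU, hV, hyV⟩
  refine ⟨fun y => ?_, hflsc.sInf_image_of_upperHemicontinuous hne hcomp hφ⟩
  obtain ⟨z, hz, hmin⟩ := hflsc.exists_isMinOn_section y (hcomp y) (hne y)
  exact ⟨z, hz, isMinOn_iff.1 hmin⟩
end

section
/- Let Y be a separable metric space and 𝒫 the set of Borel probability measures on Y. Then the Borel σ-algebra of the weak topology on 𝒫 coincides with the σ-algebra generated by the evaluation maps ν ↦ ν(A) for A Borel in Y. -/
/-!
By the portmanteau theorem, `νᵢ → ν` weakly as soon as `ν G ≤ liminf νᵢ G` for every open `G`,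
and in a second-countable space every open `G` is exhausted in measure by finite unions of basic
open sets. Hence the weak topology is generated by the countably many sets `{ν | q < ν G}` with
`q` rational and `G` such a finite union; a topology with a countable subbasis is second countable
and its Borel σ-algebra is generated by that subbasis, so Borel sets are evaluation-measurable.
Conversely `ν ↦ ν G` is lower semicontinuous for open `G`, hence Borel measurable, and a
Dynkin-system argument extends this to all measurable `G`.
-/

open MeasureTheory Set

open Filter Topology TopologicalSpace ENNReal

namespace MeasureTheory.ProbabilityMeasure

variable {Ω : Type*} [MeasurableSpace Ω] [TopologicalSpace Ω]

theorem lowerSemicontinuous_apply_of_isOpen [OpensMeasurableSpace Ω] [HasOuterApproxClosed Ω]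
    {G : Set Ω} (hG : IsOpen G) :
    LowerSemicontinuous fun ν : ProbabilityMeasure Ω ↦ (ν : Measure Ω) G := fun _ _ hy ↦
  eventually_lt_of_lt_liminf (hy.trans_le (le_liminf_measure_open_of_tendsto tendsto_id hG))

theorem measurable_apply_of_borel [BorelSpace Ω] [HasOuterApproxClosed Ω] {A : Set Ω}
    (hA : MeasurableSet A) :
    Measurable[borel (ProbabilityMeasure Ω)] fun ν : ProbabilityMeasure Ω ↦ (ν : Measure Ω) A := by
  let : MeasurableSpace (ProbabilityMeasure Ω) := borel _
  have : BorelSpace (ProbabilityMeasure Ω) := ⟨rfl⟩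
  refine MeasurableSpace.induction_on_inter
    (C := fun A _ ↦ Measurable fun ν : ProbabilityMeasure Ω ↦ (ν : Measure Ω) A)
    BorelSpace.measurable_eq isPiSystem_isOpen (by simp)
    (fun G hG ↦ (lowerSemicontinuous_apply_of_isOpen hG).measurable) (fun A hA ih ↦ ?_)
    (fun f hdisj hf ih ↦ ?_) A hA
  · simp_rw [measure_compl hA (measure_ne_top _ _), measure_univ]
    exact ih.const_sub 1
  · simp_rw [measure_iUnion hdisj hf]
    exact Measurable.tsum ih

def rationalSuperlevelSets (𝒢 : Set (Set Ω)) : Set (Set (ProbabilityMeasure Ω)) :=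
  ⋃ G ∈ 𝒢, range fun q : ℚ ↦ {ν | ENNReal.ofReal q < (ν : Measure Ω) G}

theorem topology_eq_generateFrom_rationalSuperlevelSets [OpensMeasurableSpace Ω]
    [HasOuterApproxClosed Ω] {𝒢 : Set (Set Ω)} (h𝒢 : 𝒢.Countable) (hopen : ∀ G ∈ 𝒢, IsOpen G)
    (happrox : ∀ (P : ProbabilityMeasure Ω) (G : Set Ω), IsOpen G →
      ∀ y < (P : Measure Ω) G, ∃ G' ∈ 𝒢, G' ⊆ G ∧ y < (P : Measure Ω) G') :
    (inferInstance : TopologicalSpace (ProbabilityMeasure Ω)) =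
      generateFrom (rationalSuperlevelSets 𝒢) := by
  refine le_antisymm (le_generateFrom ?_) (le_of_nhds_le_nhds fun P ↦ ?_)
  · simp only [rationalSuperlevelSets, mem_iUnion₂, mem_range]
    rintro _ ⟨G, hG, q, rfl⟩
    exact (lowerSemicontinuous_apply_of_isOpen (hopen G hG)).isOpen_preimage _
  · rw [nhds_generateFrom]
    have hcount : (rationalSuperlevelSets 𝒢).Countable :=
      h𝒢.biUnion fun _ _ ↦ countable_range _
    have : IsCountablyGenerated (⨅ s ∈ {s | P ∈ s ∧ s ∈ rationalSuperlevelSets 𝒢}, 𝓟 s) :=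
      isCountablyGenerated_biInf_principal (hcount.mono fun _ h ↦ h.2)
    refine tendsto_id'.1 (tendsto_of_forall_isOpen_le_liminf' (μs := id) fun G hG ↦ ?_)
    rw [le_liminf_iff]
    intro y hy
    obtain ⟨G', hG'𝒢, hG'G, hy'⟩ := happrox P G hG y hy
    obtain ⟨q, -, hyq, hqG'⟩ := ENNReal.lt_iff_exists_rat_btwn.1 hy'
    have hmem : {ν : ProbabilityMeasure Ω | ENNReal.ofReal q < (ν : Measure Ω) G'} ∈
        ⨅ s ∈ {s | P ∈ s ∧ s ∈ rationalSuperlevelSets 𝒢}, 𝓟 s :=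
      mem_iInf_of_mem _ <| mem_iInf_of_mem ⟨hqG', mem_biUnion hG'𝒢 ⟨q, rfl⟩⟩ <|
        mem_principal_self _
    filter_upwards [hmem] with ν hν
    exact hyq.trans (hν.trans_le (measure_mono hG'G))

theorem exists_finite_subset_countableBasis_lt_apply_sUnion [SecondCountableTopology Ω]
    (P : ProbabilityMeasure Ω) {G : Set Ω} (hG : IsOpen G) {y : ℝ≥0∞}
    (hy : y < (P : Measure Ω) G) :
    ∃ T ⊆ countableBasis Ω, T.Finite ∧ ⋃₀ T ⊆ G ∧ y < (P : Measure Ω) (⋃₀ T) := by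
  lift y to NNReal using (hy.trans_le prob_le_one).ne_top
  rw [← ennreal_coeFn_eq_coeFn_toMeasure, ENNReal.coe_lt_coe] at hy
  have hbasis := isBasis_countableBasis Ω
  have hsmall : ∀ u, IsOpen u → ∀ x ∈ u, ∃ v ∈ countableBasis Ω, v ∈ 𝓝 x ∧ v ⊆ u := by
    intro u hu x hx
    obtain ⟨v, hvB, hxv, hvu⟩ := hbasis.exists_subset_of_mem_open hx hu
    exact ⟨v, hvB, (hbasis.isOpen hvB).mem_nhds hxv, hvu⟩
  obtain ⟨T, hTB, hyT, hTG⟩ := P.exists_lt_measure_biUnion_of_isOpen hsmall hG hy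
  refine ⟨T, hTB, T.finite_toSet, by rwa [sUnion_eq_biUnion], ?_⟩
  rwa [sUnion_eq_biUnion, ← ennreal_coeFn_eq_coeFn_toMeasure, ENNReal.coe_lt_coe]

theorem exists_borel_eq_generateFrom_rationalSuperlevelSets [OpensMeasurableSpace Ω]
    [HasOuterApproxClosed Ω] [SecondCountableTopology Ω] :
    ∃ 𝒢 : Set (Set Ω), (∀ G ∈ 𝒢, IsOpen G) ∧
      borel (ProbabilityMeasure Ω) = MeasurableSpace.generateFrom (rationalSuperlevelSets 𝒢) := by
  set 𝒢 := sUnion '' {T | T.Finite ∧ T ⊆ countableBasis Ω}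
  have hcount : 𝒢.Countable :=
    (countable_ofPred_finite_subset (countable_countableBasis Ω)).image _
  have hopen : ∀ G ∈ 𝒢, IsOpen G := by
    rintro _ ⟨T, ⟨-, hT⟩, rfl⟩
    exact isOpen_sUnion fun t ht ↦ (isBasis_countableBasis Ω).isOpen (hT ht)
  have htop := topology_eq_generateFrom_rationalSuperlevelSets hcount hopen fun P G hG y hy ↦ by
    obtain ⟨T, hTB, hT, hTG, hyT⟩ := exists_finite_subset_countableBasis_lt_apply_sUnion P hG hy
    exact ⟨⋃₀ T, ⟨T, ⟨hT, hTB⟩, rfl⟩, hTG, hyT⟩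
  have : SecondCountableTopology (ProbabilityMeasure Ω) :=
    ⟨⟨_, hcount.biUnion fun _ _ ↦ countable_range _, htop⟩⟩
  exact ⟨𝒢, hopen, borel_eq_generateFrom_of_subbasis htop⟩

end MeasureTheory.ProbabilityMeasure

theorem stmt15
    {Y : Type*} [MetricSpace Y] [TopologicalSpace.SeparableSpace Y]
    [MeasurableSpace Y] [BorelSpace Y] :
    borel (ProbabilityMeasure Y) =
      MeasurableSpace.generateFrom
        {S : Set (ProbabilityMeasure Y) |
          ∃ (A : Set Y) (B : Set ENNReal), MeasurableSet A ∧ MeasurableSet B ∧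
            S = {ν : ProbabilityMeasure Y | (ν : Measure Y) A ∈ B}} := by
  obtain ⟨𝒢, hopen, hborel⟩ :=
    ProbabilityMeasure.exists_borel_eq_generateFrom_rationalSuperlevelSets (Ω := Y)
  refine le_antisymm (hborel.trans_le (MeasurableSpace.generateFrom_mono ?_))
    (MeasurableSpace.generateFrom_le ?_)
  · simp only [ProbabilityMeasure.rationalSuperlevelSets, iUnion_subset_iff, range_subset_iff]
    intro G hG q
    exact ⟨G, Ioi (ENNReal.ofReal q), (hopen G hG).measurableSet, measurableSet_Ioi, rfl⟩
  · rintro _ ⟨A, B, hA, hB, rfl⟩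
    exact ProbabilityMeasure.measurable_apply_of_borel hA hB
end

section
/- Let γ ∈ [0,1) and suppose the Bellman operators S_t satisfy the contraction estimate |S_t u(x) - S_t w(x)| ≤ γ ‖u - w‖_∞ for all bounded measurable u, w : X → ℝ, t ∈ ℕ, x ∈ X. If (J_t)_{t∈ℕ} and (J'_t)_{t∈ℕ} are two uniformly bounded families of measurable functions both satisfying J_t = S_t J_{t+1} and J'_t = S_t J'_{t+1} for all t ∈ ℕ, then J_t = J'_t for all t ∈ ℕ. -/
/-! The uniform gap `D = sup_{t,x} |J_t x - J'_t x|` is finite, and the fixed-point equations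
together with the contraction estimate give `D ≤ γ D`; since `γ < 1`, `D = 0`. -/

theorem nonpos_of_forall_bound_le_mul {α : Type*} {γ : ℝ} (hγ : γ < 1) {a : α → ℝ}
    (ha : BddAbove (Set.range a))
    (hstep : ∀ D, 0 ≤ D → (∀ i, a i ≤ D) → ∀ i, a i ≤ γ * D) (i : α) : a i ≤ 0 := by
  have : Nonempty α := ⟨i⟩
  set D := max (⨆ j, a j) 0
  have hD : 0 ≤ D := le_max_right _ _
  have hbound : ∀ j, a j ≤ D := fun j => (le_ciSup ha j).trans (le_max_left _ _)
  have hsup : ⨆ j, a j ≤ γ * D := ciSup_le (hstep D hD hbound)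
  have hD_le : D ≤ max (γ * D) 0 := max_le_max hsup le_rfl
  have hD_zero : D ≤ 0 := by
    rcases le_max_iff.mp hD_le with h | h <;> nlinarith
  exact (hbound i).trans hD_zero

theorem stmt18_general
    {X : Type*} [MeasurableSpace X]
    (γ : ℝ) (hγ1 : γ < 1)
    (S : ℕ → (X → ℝ) → X → ℝ)
    (hcontr : ∀ (t : ℕ) (u w : X → ℝ), Measurable u → Measurable w →
      (∃ M : ℝ, ∀ x, |u x| ≤ M) → (∃ M : ℝ, ∀ x, |w x| ≤ M) →
      ∀ D : ℝ, 0 ≤ D → (∀ x, |u x - w x| ≤ D) →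
        ∀ x, |S t u x - S t w x| ≤ γ * D)
    (J J' : ℕ → X → ℝ)
    (hJmeas : ∀ t, Measurable (J t)) (hJ'meas : ∀ t, Measurable (J' t))
    (hJbdd : ∃ M : ℝ, ∀ t x, |J t x| ≤ M) (hJ'bdd : ∃ M : ℝ, ∀ t x, |J' t x| ≤ M)
    (hJfix : ∀ t, J t = S t (J (t + 1))) (hJ'fix : ∀ t, J' t = S t (J' (t + 1))) :
    ∀ t, J t = J' t := by
  obtain ⟨M, hM⟩ := hJbdd
  obtain ⟨M', hM'⟩ := hJ'bdd
  set gap : ℕ × X → ℝ := fun p => |J p.1 p.2 - J' p.1 p.2|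
  have hbdd : BddAbove (Set.range gap) := ⟨M + M', by
    rintro _ ⟨⟨t, x⟩, rfl⟩
    exact (abs_sub _ _).trans (add_le_add (hM t x) (hM' t x))⟩
  have hstep : ∀ D, 0 ≤ D → (∀ p, gap p ≤ D) → ∀ p, gap p ≤ γ * D := by
    rintro D hD hgap ⟨t, x⟩
    simp only [gap, hJfix t, hJ'fix t]
    exact hcontr t _ _ (hJmeas _) (hJ'meas _) ⟨M, hM (t + 1)⟩ ⟨M', hM' (t + 1)⟩ D hD
      (fun x => hgap (t + 1, x)) x
  intro t
  funext x
  have h := nonpos_of_forall_bound_le_mul hγ1 hbdd hstep (t, x)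
  exact sub_eq_zero.mp (abs_nonpos_iff.mp h)

theorem stmt18
    {X : Type*} [MeasurableSpace X]
    (γ : ℝ) (hγ0 : 0 ≤ γ) (hγ1 : γ < 1)
    (S : ℕ → (X → ℝ) → X → ℝ)
    (hcontr : ∀ (t : ℕ) (u w : X → ℝ), Measurable u → Measurable w →
      (∃ M : ℝ, ∀ x, |u x| ≤ M) → (∃ M : ℝ, ∀ x, |w x| ≤ M) →
      ∀ D : ℝ, 0 ≤ D → (∀ x, |u x - w x| ≤ D) →
        ∀ x, |S t u x - S t w x| ≤ γ * D)
    (J J' : ℕ → X → ℝ)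
    (hJmeas : ∀ t, Measurable (J t)) (hJ'meas : ∀ t, Measurable (J' t))
    (hJbdd : ∃ M : ℝ, ∀ t x, |J t x| ≤ M) (hJ'bdd : ∃ M : ℝ, ∀ t x, |J' t x| ≤ M)
    (hJfix : ∀ t, J t = S t (J (t + 1))) (hJ'fix : ∀ t, J' t = S t (J' (t + 1))) :
    ∀ t, J t = J' t :=
  stmt18_general γ hγ1 S hcontr J J' hJmeas hJ'meas hJbdd hJ'bdd hJfix hJ'fix
end
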